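/- arXiv:0804.0686 — 2 statements merged into one kernel-verified Lean document; each statement's English description precedes it below -/
import Mathlib

section
/- For any adaptive strategy P⃗ⁿ and test f_n on (X×Y)ⁿ, and any s ≤ 0: (1−s) log E_{Q_{W,P⃗ⁿ}}[1−f_n] ≤ −s log E_{Q_{W̄,P⃗ⁿ}}[1−f_n] + n·sup_{x∈X} φ(s|W_x‖W̄_x). -/
open Filter

/-- `W` is a (classical) channel from `X` to `Y` with full-support outputs. -/
def IsChannel {X Y : Type*} [Fintype Y] (W : X → Y → ℝ) : Prop :=
  ∀ x, (∀ y, 0 < W x y) ∧ ∑ y, W x y = 1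

/-- An adaptive strategy: for each step `k`, a conditional distribution of the
`(k+1)`-st input given the first `k` input-output pairs. -/
def IsStrategy {X Y : Type*} [Fintype X]
    (strat : (k : ℕ) → (Fin k → X × Y) → X → ℝ) : Prop :=
  ∀ k h, (∀ x, 0 ≤ strat k h x) ∧ ∑ x, strat k h x = 1

/-- Joint distribution of `n` adaptive input-output pairs under channel `W`. -/
noncomputable def Qdist {X Y : Type*} [Fintype X] [Fintype Y] (W : X → Y → ℝ)
    (strat : (k : ℕ) → (Fin k → X × Y) → X → ℝ) (n : ℕ) (h : Fin n → X × Y) : ℝ :=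
  ∏ k : Fin n,
    strat k.1 (fun j : Fin k.1 => h ⟨j.1, j.2.trans k.2⟩) (h k).1 * W (h k).1 (h k).2

/-- Marginal distribution of the `(k+1)`-st input under channel `W`. -/
noncomputable def inMarg {X Y : Type*} [Fintype X] [Fintype Y] (W : X → Y → ℝ)
    (strat : (k : ℕ) → (Fin k → X × Y) → X → ℝ) (k : ℕ) (x : X) : ℝ :=
  ∑ h : Fin k → X × Y, Qdist W strat k h * strat k h x

/-- Kullback–Leibler divergence of finitely supported distributions. -/
noncomputable def Dkl {α : Type*} [Fintype α] (P Q : α → ℝ) : ℝ :=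
  ∑ a, P a * Real.log (P a / Q a)

/-- `φ(s|P‖Q) = log ∑ Q^s P^{1-s}`. -/
noncomputable def phiRel {α : Type*} [Fintype α] (s : ℝ) (P Q : α → ℝ) : ℝ :=
  Real.log (∑ a, Q a ^ s * P a ^ (1 - s))

/-!
Weighted Hölder, with weights `Q̄ (1-f)`, ratios `Q / Q̄` and exponent `1 - s ≥ 1`, gives
`Q(1-f)^{1-s} ≤ Q̄(1-f)^{-s} · ∑ Q̄^s Q^{1-s}`, the data processing inequality for `Φ(s)` under
the binary test; the junk case `Q(1-f) = 0` needs `Q̄(1-f) = 0` as well, which holds because all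
channel outputs have full support, and `∑ Q̄^s Q^{1-s} ≥ 1`. For the chain rule, `Q̄^s Q^{1-s}` is itself the joint law of the
same adaptive strategy run through the kernel `W̄_x^s W_x^{1-s}`, whose rows have mass at most
`exp (sup_x φ(s|W_x‖W̄_x))`; summing out the last pair `n` times bounds the total mass.
-/

theorem rpow_mul_rpow_one_sub {t : ℝ} (ht : 0 ≤ t) (s : ℝ) : t ^ s * t ^ (1 - s) = t := by
  rw [← Real.rpow_add' ht (by norm_num), add_sub_cancel, Real.rpow_one]

section Finite

variable {α : Type*} [Fintype α] {P Q g : α → ℝ} {s : ℝ}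

theorem rpow_sum_mul_le (hP : ∀ a, 0 ≤ P a) (hQ : ∀ a, 0 ≤ Q a) (hPQ : ∀ a, Q a = 0 → P a = 0)
    (hg : ∀ a, 0 ≤ g a) (hs : s ≤ 0) :
    (∑ a, P a * g a) ^ (1 - s) ≤
      (∑ a, Q a * g a) ^ (-s) * ∑ a, g a * (Q a ^ s * P a ^ (1 - s)) := by
  have hp : 1 ≤ 1 - s := by linarith
  have hp₀ : 1 - s ≠ 0 := by linarith
  -- weighted Hölder with weights `Q g` and ratios `P / Q`; where `Q = 0` also `P = 0`, so the
  -- junk value `P / 0 = 0` does no harm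
  have holder := Real.inner_le_weight_mul_Lp_of_nonneg Finset.univ hp (fun a => Q a * g a)
    (fun a => P a / Q a) (fun a => mul_nonneg (hQ a) (hg a)) (fun a => div_nonneg (hP a) (hQ a))
  have hlin : ∀ a, Q a * g a * (P a / Q a) = P a * g a := by
    intro a
    rcases (hQ a).eq_or_lt with h | h
    · simp [← h, hPQ a h.symm]
    · field_simp
  have hpow : ∀ a, Q a * g a * (P a / Q a) ^ (1 - s) = g a * (Q a ^ s * P a ^ (1 - s)) := by
    intro a
    rcases (hQ a).eq_or_lt with h | h
    · simp [← h, hPQ a h.symm, Real.zero_rpow hp₀]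
    · rw [Real.div_rpow (hP a) h.le, show s = 1 - (1 - s) by ring, Real.rpow_sub h,
        Real.rpow_one, sub_sub_cancel]
      field_simp
  simp only [hlin, hpow] at holder
  have hB : 0 ≤ ∑ a, Q a * g a := Finset.sum_nonneg fun a _ => mul_nonneg (hQ a) (hg a)
  have hT : 0 ≤ ∑ a, g a * (Q a ^ s * P a ^ (1 - s)) := Finset.sum_nonneg fun a _ =>
    mul_nonneg (hg a) (mul_nonneg (Real.rpow_nonneg (hQ a) _) (Real.rpow_nonneg (hP a) _))
  calc (∑ a, P a * g a) ^ (1 - s)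
      ≤ ((∑ a, Q a * g a) ^ (1 - (1 - s)⁻¹) * (∑ a, g a * (Q a ^ s * P a ^ (1 - s))) ^ (1 - s)⁻¹)
          ^ (1 - s) :=
        Real.rpow_le_rpow (Finset.sum_nonneg fun a _ => mul_nonneg (hP a) (hg a)) holder
          (by linarith)
    _ = (∑ a, Q a * g a) ^ (-s) * ∑ a, g a * (Q a ^ s * P a ^ (1 - s)) := by
        rw [Real.mul_rpow (Real.rpow_nonneg hB _) (Real.rpow_nonneg hT _), ← Real.rpow_mul hB,
          ← Real.rpow_mul hT, inv_mul_cancel₀ hp₀, Real.rpow_one]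
        congr 2
        field_simp
        ring

theorem sum_mul_eq_zero_iff (hP : ∀ a, 0 ≤ P a) (hQ : ∀ a, 0 ≤ Q a) (hg : ∀ a, 0 ≤ g a)
    (hPQ : ∀ a, P a = 0 ↔ Q a = 0) : ∑ a, P a * g a = 0 ↔ ∑ a, Q a * g a = 0 := by
  simp only [Finset.sum_eq_zero_iff_of_nonneg fun a _ => mul_nonneg (hP a) (hg a),
    Finset.sum_eq_zero_iff_of_nonneg fun a _ => mul_nonneg (hQ a) (hg a), mul_eq_zero, hPQ]

theorem one_le_sum_rpow_mul_rpow (hP : ∀ a, 0 ≤ P a) (hQ : ∀ a, 0 ≤ Q a) (hP₁ : ∑ a, P a = 1)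
    (hQ₁ : ∑ a, Q a = 1) (hPQ : ∀ a, Q a = 0 → P a = 0) (hs : s ≤ 0) :
    1 ≤ ∑ a, Q a ^ s * P a ^ (1 - s) := by
  simpa [hP₁, hQ₁] using rpow_sum_mul_le hP hQ hPQ (g := fun _ => 1) (fun _ => zero_le_one) hs

theorem mul_log_sum_mul_le (hP : ∀ a, 0 ≤ P a) (hQ : ∀ a, 0 ≤ Q a) (hP₁ : ∑ a, P a = 1)
    (hQ₁ : ∑ a, Q a = 1) (hPQ : ∀ a, P a = 0 ↔ Q a = 0) (hg : ∀ a, g a ∈ Set.Icc (0 : ℝ) 1)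
    (hs : s ≤ 0) :
    (1 - s) * Real.log (∑ a, P a * g a) ≤ -s * Real.log (∑ a, Q a * g a) + phiRel s P Q := by
  have hg₀ : ∀ a, 0 ≤ g a := fun a => (hg a).1
  have hT : 1 ≤ ∑ a, Q a ^ s * P a ^ (1 - s) :=
    one_le_sum_rpow_mul_rpow hP hQ hP₁ hQ₁ (fun a => (hPQ a).2) hs
  have hA : 0 ≤ ∑ a, P a * g a := Finset.sum_nonneg fun a _ => mul_nonneg (hP a) (hg₀ a)
  have hB : 0 ≤ ∑ a, Q a * g a := Finset.sum_nonneg fun a _ => mul_nonneg (hQ a) (hg₀ a)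
  have hzero := sum_mul_eq_zero_iff hP hQ hg₀ hPQ
  rcases hA.eq_or_lt with hA₀ | hA₀
  · rw [← hA₀, hzero.1 hA₀.symm, Real.log_zero, mul_zero, mul_zero, zero_add]
    exact Real.log_nonneg hT
  have hB₀ : 0 < ∑ a, Q a * g a := hB.lt_of_ne fun h => hA₀.ne' (hzero.2 h.symm)
  have hTg : ∑ a, g a * (Q a ^ s * P a ^ (1 - s)) ≤ ∑ a, Q a ^ s * P a ^ (1 - s) :=
    Finset.sum_le_sum fun a _ => mul_le_of_le_one_left
      (mul_nonneg (Real.rpow_nonneg (hQ a) _) (Real.rpow_nonneg (hP a) _)) (hg a).2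
  have key := (rpow_sum_mul_le hP hQ (fun a => (hPQ a).2) hg₀ hs).trans
    (mul_le_mul_of_nonneg_left hTg (Real.rpow_nonneg hB _))
  have := Real.log_le_log (Real.rpow_pos_of_pos hA₀ _) key
  rwa [Real.log_mul (Real.rpow_pos_of_pos hB₀ _).ne' (by linarith), Real.log_rpow hA₀,
    Real.log_rpow hB₀] at this

end Finite

section Adaptive

variable {X Y : Type*} [Fintype X] [Fintype Y] {strat : (k : ℕ) → (Fin k → X × Y) → X → ℝ}

theorem Qdist_snoc (V : X → Y → ℝ) (n : ℕ) (g : Fin n → X × Y) (p : X × Y) :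
    Qdist V strat (n + 1) (Fin.snoc g p) = Qdist V strat n g * (strat n g p.1 * V p.1 p.2) := by
  rw [Qdist, Qdist, Fin.prod_univ_castSucc]
  congr 1
  · refine Finset.prod_congr rfl fun k _ => ?_
    have hk : ∀ j : Fin k.1, (j : ℕ) < n := fun j => j.2.trans k.2
    simp [Fin.snoc, hk]
  · simp [Fin.snoc]

theorem sum_Qdist_succ (V : X → Y → ℝ) (n : ℕ) :
    ∑ h, Qdist V strat (n + 1) h = ∑ g, Qdist V strat n g * ∑ x, strat n g x * ∑ y, V x y := by
  rw [← (Fin.snocEquiv fun _ => X × Y).sum_comp, Fintype.sum_prod_type_right]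
  simp [Fin.snocEquiv, Qdist_snoc, Fintype.sum_prod_type, Finset.mul_sum]

theorem Qdist_nonneg {V : X → Y → ℝ} (hV : ∀ x y, 0 ≤ V x y) (hstrat : IsStrategy strat) (n : ℕ)
    (h : Fin n → X × Y) : 0 ≤ Qdist V strat n h :=
  Finset.prod_nonneg fun _ _ => mul_nonneg ((hstrat _ _).1 _) (hV _ _)

theorem sum_Qdist_le_pow {V : X → Y → ℝ} (hV : ∀ x y, 0 ≤ V x y) (hstrat : IsStrategy strat)
    {C : ℝ} (hC : ∀ x, ∑ y, V x y ≤ C) (hC₀ : 0 ≤ C) (n : ℕ) :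
    ∑ h, Qdist V strat n h ≤ C ^ n := by
  induction n with
  | zero => simp [Qdist]
  | succ n ih =>
    have step : ∀ g, ∑ x, strat n g x * ∑ y, V x y ≤ C := fun g =>
      calc ∑ x, strat n g x * ∑ y, V x y
          ≤ ∑ x, strat n g x * C :=
            Finset.sum_le_sum fun x _ => mul_le_mul_of_nonneg_left (hC x) ((hstrat n g).1 x)
        _ = C := by rw [← Finset.sum_mul, (hstrat n g).2, one_mul]
    calc ∑ h, Qdist V strat (n + 1) h
        ≤ ∑ g, Qdist V strat n g * C := by
          rw [sum_Qdist_succ]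
          exact Finset.sum_le_sum fun g _ =>
            mul_le_mul_of_nonneg_left (step g) (Qdist_nonneg hV hstrat n g)
      _ ≤ C ^ (n + 1) := by
          rw [← Finset.sum_mul, pow_succ]
          exact mul_le_mul_of_nonneg_right ih hC₀

theorem sum_Qdist_eq_one {W : X → Y → ℝ} (hW : IsChannel W) (hstrat : IsStrategy strat)
    (n : ℕ) : ∑ h, Qdist W strat n h = 1 := by
  induction n with
  | zero => simp [Qdist]
  | succ n ih => simp [sum_Qdist_succ, (hW _).2, (hstrat n _).2, ih]

theorem Qdist_eq_zero_iff {W : X → Y → ℝ} (hW : IsChannel W) (n : ℕ) (h : Fin n → X × Y) :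
    Qdist W strat n h = 0 ↔
      ∃ k : Fin n, strat k (fun j : Fin k => h ⟨j, j.2.trans k.2⟩) (h k).1 = 0 := by
  simp [Qdist, Finset.prod_eq_zero_iff, ((hW _).1 _).ne']

theorem Qdist_rpow_mul_rpow {W Wb : X → Y → ℝ} (hW : IsChannel W) (hWb : IsChannel Wb)
    (hstrat : IsStrategy strat) (s : ℝ) (n : ℕ) (h : Fin n → X × Y) :
    Qdist Wb strat n h ^ s * Qdist W strat n h ^ (1 - s) =
      Qdist (fun x y => Wb x y ^ s * W x y ^ (1 - s)) strat n h := by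
  simp only [Qdist]
  rw [← Real.finsetProd_rpow, ← Real.finsetProd_rpow, ← Finset.prod_mul_distrib]
  · refine Finset.prod_congr rfl fun k _ => ?_
    set t := strat k (fun j : Fin k => h ⟨j, j.2.trans k.2⟩) (h k).1
    have ht : 0 ≤ t := (hstrat _ _).1 _
    rw [Real.mul_rpow ht ((hWb _).1 _).le, Real.mul_rpow ht ((hW _).1 _).le,
      mul_mul_mul_comm, rpow_mul_rpow_one_sub ht s]
  · exact fun _ _ => mul_nonneg ((hstrat _ _).1 _) ((hW _).1 _).le
  · exact fun _ _ => mul_nonneg ((hstrat _ _).1 _) ((hWb _).1 _).le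

theorem Qdist_eq_zero_iff_Qdist_eq_zero {W Wb : X → Y → ℝ} (hW : IsChannel W)
    (hWb : IsChannel Wb) (n : ℕ) (h : Fin n → X × Y) :
    Qdist W strat n h = 0 ↔ Qdist Wb strat n h = 0 := by
  rw [Qdist_eq_zero_iff hW, Qdist_eq_zero_iff hWb]

theorem phiRel_Qdist_le {W Wb : X → Y → ℝ} (hW : IsChannel W) (hWb : IsChannel Wb)
    (hstrat : IsStrategy strat) {s : ℝ} (hs : s ≤ 0) (n : ℕ) :
    phiRel s (Qdist W strat n) (Qdist Wb strat n) ≤ n * ⨆ x, phiRel s (W x) (Wb x) := by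
  set Φ := ⨆ x, phiRel s (W x) (Wb x)
  have hT₁ : 1 ≤ ∑ h, Qdist Wb strat n h ^ s * Qdist W strat n h ^ (1 - s) :=
    one_le_sum_rpow_mul_rpow (Qdist_nonneg (fun x y => ((hW x).1 y).le) hstrat n)
      (Qdist_nonneg (fun x y => ((hWb x).1 y).le) hstrat n) (sum_Qdist_eq_one hW hstrat n)
      (sum_Qdist_eq_one hWb hstrat n) (fun h => (Qdist_eq_zero_iff_Qdist_eq_zero hW hWb n h).2) hs
  have hx : ∀ x, ∑ y, Wb x y ^ s * W x y ^ (1 - s) ≤ Real.exp Φ := fun x =>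
    (Real.le_exp_log _).trans <| Real.exp_le_exp.2 <|
      le_ciSup (Set.finite_range fun x => phiRel s (W x) (Wb x)).bddAbove x
  have hT : ∑ h, Qdist Wb strat n h ^ s * Qdist W strat n h ^ (1 - s) ≤ Real.exp Φ ^ n := by
    simp only [Qdist_rpow_mul_rpow hW hWb hstrat]
    refine sum_Qdist_le_pow (fun x y => ?_) hstrat hx (Real.exp_pos Φ).le n
    exact mul_nonneg (Real.rpow_nonneg ((hWb x).1 y).le s) (Real.rpow_nonneg ((hW x).1 y).le _)
  calc phiRel s (Qdist W strat n) (Qdist Wb strat n)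
      ≤ Real.log (Real.exp Φ ^ n) := Real.log_le_log (by linarith) hT
    _ = n * Φ := by rw [Real.log_pow, Real.log_exp]

end Adaptive

theorem stmt10_general {X Y : Type*} [Fintype X] [Fintype Y]
    (W Wb : X → Y → ℝ) (hW : IsChannel W) (hWb : IsChannel Wb)
    (strat : (k : ℕ) → (Fin k → X × Y) → X → ℝ) (hstrat : IsStrategy strat)
    (n : ℕ) (f : (Fin n → X × Y) → ℝ) (hf : ∀ h, f h ∈ Set.Icc (0 : ℝ) 1)
    (s : ℝ) (hs : s ≤ 0) :
    (1 - s) * Real.log (∑ h : Fin n → X × Y, Qdist W strat n h * (1 - f h)) ≤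
      -s * Real.log (∑ h : Fin n → X × Y, Qdist Wb strat n h * (1 - f h)) +
        n * ⨆ x, phiRel s (W x) (Wb x) := by
  have htest : ∀ h, 1 - f h ∈ Set.Icc (0 : ℝ) 1 := fun h =>
    ⟨by linarith [(hf h).2], by linarith [(hf h).1]⟩
  have hdpi := mul_log_sum_mul_le (Qdist_nonneg (fun x y => ((hW x).1 y).le) hstrat n)
    (Qdist_nonneg (fun x y => ((hWb x).1 y).le) hstrat n) (sum_Qdist_eq_one hW hstrat n)
    (sum_Qdist_eq_one hWb hstrat n) (Qdist_eq_zero_iff_Qdist_eq_zero hW hWb n) htest hs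
  linarith [phiRel_Qdist_le hW hWb hstrat hs n]

theorem stmt10 {X Y : Type*} [Fintype X] [Fintype Y] [Nonempty X]
    (W Wb : X → Y → ℝ) (hW : IsChannel W) (hWb : IsChannel Wb)
    (strat : (k : ℕ) → (Fin k → X × Y) → X → ℝ) (hstrat : IsStrategy strat)
    (n : ℕ) (f : (Fin n → X × Y) → ℝ) (hf : ∀ h, f h ∈ Set.Icc (0 : ℝ) 1)
    (s : ℝ) (hs : s ≤ 0) :
    (1 - s) * Real.log (∑ h : Fin n → X × Y, Qdist W strat n h * (1 - f h)) ≤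
      -s * Real.log (∑ h : Fin n → X × Y, Qdist Wb strat n h * (1 - f h)) +
        n * ⨆ x, phiRel s (W x) (Wb x) :=
  stmt10_general W Wb hW hWb strat hstrat n f hf s hs
end

section
/- For any adaptive strategy P⃗ⁿ and test f_n, the two error probabilities satisfy −h(E_{Q_{W,P⃗ⁿ}}[1−f_n]) − E_{Q_{W,P⃗ⁿ}}[1−f_n] · log E_{Q_{W̄,P⃗ⁿ}}[1−f_n] ≤ n · sup_{x∈X} D(W_x‖W̄_x), where h is the binary entropy function. -/
open Filter

/-- Binary entropy function. -/
noncomputable def binEnt (p : ℝ) : ℝ := -(p * Real.log p) - (1 - p) * Real.log (1 - p)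


/-!
Compare both sides with the divergence `D(Q_W ‖ Q_W̄)` of the two adaptive joint laws. By the
log-sum inequality, passing from a history to the outcome of the randomized test `1 - f` does not
increase the divergence, and the binary divergence of the outcome dominates the left-hand side
because `log (1 - q) ≤ 0`. By the chain rule, each further input–output pair adds the average of
`D(W_x ‖ W̄_x)` over the strategy's current input law, which is at most the supremum.
-/

open Real

section RealInequalities

lemma sub_le_mul_log_div {a c : ℝ} (ha : 0 ≤ a) (hc : 0 < c) : a - c ≤ a * log (a / c) := by
  have h := mul_nonneg hc.le (InformationTheory.klFun_nonneg (div_nonneg ha hc.le))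
  rw [InformationTheory.klFun_apply] at h
  field_simp at h
  linarith

/-- The log-sum inequality. -/
lemma sum_mul_log_sum_div_sum_le {ι : Type*} [Fintype ι] (a b : ι → ℝ) (ha : ∀ i, 0 ≤ a i)
    (hb : ∀ i, 0 ≤ b i) (hab : ∀ i, b i = 0 → a i = 0) :
    (∑ i, a i) * log ((∑ i, a i) / ∑ i, b i) ≤ ∑ i, a i * log (a i / b i) := by
  set A := ∑ i, a i
  set B := ∑ i, b i
  have hb_pos : ∀ i, 0 < a i → 0 < b i := fun i hai =>
    (hb i).lt_of_ne fun h => hai.ne' (hab i h.symm)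
  have hA0 : 0 ≤ A := Finset.sum_nonneg fun i _ => ha i
  rcases hA0.eq_or_lt with hA | hA
  · rw [← hA, zero_mul]
    refine Finset.sum_nonneg fun i _ => ?_
    rw [(Finset.sum_eq_zero_iff_of_nonneg fun i _ => ha i).1 hA.symm i (Finset.mem_univ i)]
    simp
  obtain ⟨j, -, hj⟩ := (Finset.sum_pos_iff_of_nonneg fun i _ => ha i).1 hA
  have hB : 0 < B :=
    (hb_pos j hj).trans_le (Finset.single_le_sum (fun i _ => hb i) (Finset.mem_univ j))
  set r := A / B
  have hr : 0 < r := div_pos hA hB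
  have key : ∀ i, a i * log r + (a i - b i * r) ≤ a i * log (a i / b i) := by
    intro i
    rcases (ha i).eq_or_lt with hai | hai
    · simpa [← hai] using mul_nonneg (hb i) hr.le
    have h := sub_le_mul_log_div (ha i) (mul_pos (hb_pos i hai) hr)
    rw [← div_div, log_div (div_pos hai (hb_pos i hai)).ne' hr.ne'] at h
    linarith
  calc A * log r = ∑ i, (a i * log r + (a i - b i * r)) := by
        rw [Finset.sum_add_distrib, Finset.sum_sub_distrib, ← Finset.sum_mul, ← Finset.sum_mul,
          mul_div_cancel₀ A hB.ne']
        ring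
    _ ≤ ∑ i, a i * log (a i / b i) := Finset.sum_le_sum fun i _ => key i

lemma mul_log_sub_mul_log_le_mul_log_div {a b : ℝ} (ha₀ : 0 ≤ a) (ha₁ : a ≤ 1) (hb : 0 ≤ b) :
    a * log a - a * log b ≤ a * log (a / b) := by
  rcases ha₀.eq_or_lt with rfl | ha
  · simp
  rcases hb.eq_or_lt with rfl | hb
  -- at `b = 0` both `log b` and `log (a / b)` take the junk value `0`
  · simpa using mul_log_nonpos ha₀ ha₁
  rw [log_div ha.ne' hb.ne', mul_sub]

lemma neg_binEnt_sub_mul_log_le_dkl {p q : ℝ} (hp : p ∈ Set.Icc 0 1) (hq : q ∈ Set.Icc 0 1) :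
    -binEnt p - p * log q ≤ Dkl ![p, 1 - p] ![q, 1 - q] := by
  obtain ⟨hp₀, hp₁⟩ := hp
  obtain ⟨hq₀, hq₁⟩ := hq
  have h₁ := mul_log_sub_mul_log_le_mul_log_div hp₀ hp₁ hq₀
  have h₂ := mul_log_sub_mul_log_le_mul_log_div (sub_nonneg.2 hp₁) (sub_le_self 1 hp₀)
    (sub_nonneg.2 hq₁)
  have h₃ : (1 - p) * log (1 - q) ≤ 0 := mul_nonpos_of_nonneg_of_nonpos (sub_nonneg.2 hp₁)
    (log_nonpos (sub_nonneg.2 hq₁) (sub_le_self 1 hq₀))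
  simp only [binEnt, Dkl, Fin.sum_univ_two, Matrix.cons_val_zero, Matrix.cons_val_one]
  linarith

lemma sum_mul_le_of_sum_eq_one {ι : Type*} [Fintype ι] {w f : ι → ℝ} {S : ℝ}
    (hw : ∀ i, 0 ≤ w i) (hw₁ : ∑ i, w i = 1) (hf : ∀ i, f i ≤ S) : ∑ i, w i * f i ≤ S :=
  calc ∑ i, w i * f i ≤ ∑ i, w i * S :=
        Finset.sum_le_sum fun i _ => mul_le_mul_of_nonneg_left (hf i) (hw i)
    _ = S := by rw [← Finset.sum_mul, hw₁, one_mul]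

lemma sum_mul_mem_Icc {ι : Type*} [Fintype ι] {w f : ι → ℝ} (hw : ∀ i, 0 ≤ w i)
    (hw₁ : ∑ i, w i = 1) (hf : ∀ i, f i ∈ Set.Icc 0 1) : ∑ i, w i * f i ∈ Set.Icc 0 1 :=
  ⟨Finset.sum_nonneg fun i _ => mul_nonneg (hw i) (hf i).1,
    sum_mul_le_of_sum_eq_one hw hw₁ fun i => (hf i).2⟩

end RealInequalities

section KullbackLeibler

variable {α β : Type*} [Fintype α] [Fintype β]

lemma dkl_comp_equiv (e : β ≃ α) (P Q : α → ℝ) : Dkl (P ∘ e) (Q ∘ e) = Dkl P Q :=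
  e.sum_comp fun a => P a * log (P a / Q a)

lemma dkl_self (P : α → ℝ) : Dkl P P = 0 :=
  Finset.sum_eq_zero fun a _ => by
    rcases eq_or_ne (P a) 0 with h | h <;> simp [h]

lemma mul_mul_log_mul_div_mul_right (p q c : ℝ) :
    p * c * log (p * c / (q * c)) = p * c * log (p / q) := by
  rcases eq_or_ne c 0 with rfl | hc
  · simp
  rw [mul_div_mul_right p q hc]

lemma dkl_test_outcome_le_dkl {P Q : α → ℝ} (hP : ∀ a, 0 ≤ P a) (hQ : ∀ a, 0 ≤ Q a)
    (hP₁ : ∑ a, P a = 1) (hQ₁ : ∑ a, Q a = 1) (hPQ : ∀ a, Q a = 0 → P a = 0)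
    (g : α → ℝ) (hg : ∀ a, g a ∈ Set.Icc 0 1) :
    Dkl ![∑ a, P a * g a, 1 - ∑ a, P a * g a] ![∑ a, Q a * g a, 1 - ∑ a, Q a * g a] ≤
      Dkl P Q := by
  have hg' : ∀ a, 0 ≤ 1 - g a := fun a => sub_nonneg.2 (hg a).2
  have h_abs_cont (c : α → ℝ) : ∀ a, Q a * c a = 0 → P a * c a = 0 := fun a h => by
    rcases mul_eq_zero.1 h with h | h <;> simp [h, hPQ a]
  have h_compl (R : α → ℝ) (hR : ∑ a, R a = 1) :
      ∑ a, R a * (1 - g a) = 1 - ∑ a, R a * g a := by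
    simp only [mul_sub, mul_one, Finset.sum_sub_distrib, hR]
  have h_accept := sum_mul_log_sum_div_sum_le (fun a => P a * g a) (fun a => Q a * g a)
    (fun a => mul_nonneg (hP a) (hg a).1) (fun a => mul_nonneg (hQ a) (hg a).1) (h_abs_cont g)
  have h_reject := sum_mul_log_sum_div_sum_le (fun a => P a * (1 - g a))
    (fun a => Q a * (1 - g a)) (fun a => mul_nonneg (hP a) (hg' a))
    (fun a => mul_nonneg (hQ a) (hg' a)) (h_abs_cont (1 - g ·))
  simp only [h_compl P hP₁, h_compl Q hQ₁, mul_mul_log_mul_div_mul_right] at h_reject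
  simp only [mul_mul_log_mul_div_mul_right] at h_accept
  have h_split : Dkl P Q = ∑ a, P a * g a * log (P a / Q a) +
      ∑ a, P a * (1 - g a) * log (P a / Q a) := by
    rw [← Finset.sum_add_distrib]
    exact Finset.sum_congr rfl fun a _ => by ring
  simp only [Dkl, Fin.sum_univ_two, Matrix.cons_val_zero, Matrix.cons_val_one] at h_split ⊢
  linarith

lemma mul_mul_log_mul_div_mul {p q k l : ℝ} (hpq : p ≠ 0 → q ≠ 0) (hkl : k ≠ 0 → l ≠ 0) :
    p * k * log (p * k / (q * l)) = p * k * log (p / q) + p * (k * log (k / l)) := by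
  rcases eq_or_ne p 0 with rfl | hp
  · simp
  rcases eq_or_ne k 0 with rfl | hk
  · simp
  rw [mul_div_mul_comm, log_mul (div_ne_zero hp (hpq hp)) (div_ne_zero hk (hkl hk))]
  ring

lemma sum_mul_kernel {P : α → ℝ} {K : α → β → ℝ} (hP : ∑ a, P a = 1)
    (hK : ∀ a, ∑ b, K a b = 1) :
    ∑ x : α × β, P x.1 * K x.1 x.2 = 1 := by
  simp only [Fintype.sum_prod_type, ← Finset.mul_sum, hK, mul_one, hP]

lemma dkl_mul_kernel (P Q : α → ℝ) (K L : α → β → ℝ) (hPQ : ∀ a, P a ≠ 0 → Q a ≠ 0)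
    (hKL : ∀ a b, K a b ≠ 0 → L a b ≠ 0) (hK : ∀ a, ∑ b, K a b = 1) :
    Dkl (fun x : α × β => P x.1 * K x.1 x.2) (fun x => Q x.1 * L x.1 x.2) =
      Dkl P Q + ∑ a, P a * Dkl (K a) (L a) := by
  simp only [Dkl, Fintype.sum_prod_type, mul_mul_log_mul_div_mul (hPQ _) (hKL _ _),
    Finset.sum_add_distrib, ← Finset.sum_mul, ← Finset.mul_sum, hK, mul_one]

end KullbackLeibler

section AdaptiveDistribution

variable {X Y : Type*} [Fintype X] [Fintype Y] {W Wb : X → Y → ℝ}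
  {strat : (k : ℕ) → (Fin k → X × Y) → X → ℝ}

lemma qdist_snoc (n : ℕ) (g : Fin n → X × Y) (z : X × Y) :
    Qdist W strat (n + 1) (Fin.snoc g z) = Qdist W strat n g * (strat n g z.1 * W z.1 z.2) := by
  have h_prefix (k : ℕ) (hk : k ≤ n) : (fun j : Fin k => (Fin.snoc g z : Fin (n + 1) → X × Y)
      ⟨j.1, j.isLt.trans_le (hk.trans n.le_succ)⟩) = fun j => g ⟨j.1, j.isLt.trans_le hk⟩ :=
    funext fun j => Fin.snoc_castSucc (α := fun _ => X × Y) z g ⟨j.1, j.isLt.trans_le hk⟩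
  simp only [Qdist, Fin.prod_univ_castSucc, Fin.snoc_castSucc, Fin.snoc_last, Fin.val_castSucc,
    Fin.val_last, h_prefix _ le_rfl, h_prefix _ (Fin.is_lt _).le]

def snocProdEquiv (Z : Type*) (n : ℕ) : (Fin n → Z) × Z ≃ (Fin (n + 1) → Z) :=
  (Equiv.prodComm _ _).trans (Fin.snocEquiv fun _ => Z)

lemma qdist_snocProdEquiv (n : ℕ) (x : (Fin n → X × Y) × (X × Y)) :
    Qdist W strat (n + 1) (snocProdEquiv (X × Y) n x) =
      Qdist W strat n x.1 * (strat n x.1 x.2.1 * W x.2.1 x.2.2) :=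
  qdist_snoc n x.1 x.2

lemma qdist_nonneg (hW : IsChannel W) (hstrat : IsStrategy strat) (n : ℕ) (h : Fin n → X × Y) :
    0 ≤ Qdist W strat n h :=
  Finset.prod_nonneg fun _ _ => mul_nonneg ((hstrat _ _).1 _) ((hW _).1 _).le

lemma sum_qdist (hW : IsChannel W) (hstrat : IsStrategy strat) (n : ℕ) :
    ∑ h : Fin n → X × Y, Qdist W strat n h = 1 := by
  induction n with
  | zero => simp [Qdist]
  | succ n ih =>
    rw [← (snocProdEquiv (X × Y) n).sum_comp]
    simp only [qdist_snocProdEquiv]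
    exact sum_mul_kernel ih fun g => sum_mul_kernel (hstrat n g).2 fun x => (hW x).2

lemma qdist_ne_zero_of_ne_zero (hWb : IsChannel Wb) {n : ℕ} {h : Fin n → X × Y}
    (hne : Qdist W strat n h ≠ 0) : Qdist Wb strat n h ≠ 0 :=
  Finset.prod_ne_zero_iff.2 fun k hk =>
    mul_ne_zero (left_ne_zero_of_mul (Finset.prod_ne_zero_iff.1 hne k hk)) ((hWb _).1 _).ne'

lemma dkl_qdist_succ (hW : IsChannel W) (hWb : IsChannel Wb) (hstrat : IsStrategy strat)
    (n : ℕ) :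
    Dkl (Qdist W strat (n + 1)) (Qdist Wb strat (n + 1)) =
      Dkl (Qdist W strat n) (Qdist Wb strat n) +
        ∑ g, Qdist W strat n g * ∑ x, strat n g x * Dkl (W x) (Wb x) := by
  rw [← dkl_comp_equiv (snocProdEquiv (X × Y) n)]
  simp only [Function.comp_def, qdist_snocProdEquiv]
  refine (dkl_mul_kernel (Qdist W strat n) (Qdist Wb strat n)
    (fun g (z : X × Y) => strat n g z.1 * W z.1 z.2)
    (fun g (z : X × Y) => strat n g z.1 * Wb z.1 z.2)
    (fun _ => qdist_ne_zero_of_ne_zero hWb)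
    (fun g z h => mul_ne_zero (left_ne_zero_of_mul h) ((hWb _).1 _).ne')
    fun g => sum_mul_kernel (hstrat n g).2 fun x => (hW x).2).trans ?_
  congr 2 with g
  rw [dkl_mul_kernel (strat n g) (strat n g) W Wb (fun _ => id)
    (fun x y _ => ((hWb x).1 y).ne') fun x => (hW x).2, dkl_self, zero_add]

lemma dkl_qdist_le (hW : IsChannel W) (hWb : IsChannel Wb) (hstrat : IsStrategy strat)
    {S : ℝ} (hS : ∀ x, Dkl (W x) (Wb x) ≤ S) (n : ℕ) :
    Dkl (Qdist W strat n) (Qdist Wb strat n) ≤ n * S := by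
  induction n with
  | zero => simp [Dkl, Qdist]
  | succ n ih =>
    have h_step := sum_mul_le_of_sum_eq_one (qdist_nonneg hW hstrat n) (sum_qdist hW hstrat n)
      fun g => sum_mul_le_of_sum_eq_one (hstrat n g).1 (hstrat n g).2 hS
    rw [dkl_qdist_succ hW hWb hstrat, Nat.cast_succ, add_one_mul]
    exact add_le_add ih h_step

end AdaptiveDistribution

theorem stmt11_general {X Y : Type*} [Fintype X] [Fintype Y]
    (W Wb : X → Y → ℝ) (hW : IsChannel W) (hWb : IsChannel Wb)
    (strat : (k : ℕ) → (Fin k → X × Y) → X → ℝ) (hstrat : IsStrategy strat)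
    (n : ℕ) (f : (Fin n → X × Y) → ℝ) (hf : ∀ h, f h ∈ Set.Icc (0 : ℝ) 1) :
    -binEnt (∑ h : Fin n → X × Y, Qdist W strat n h * (1 - f h)) -
      (∑ h : Fin n → X × Y, Qdist W strat n h * (1 - f h)) *
        Real.log (∑ h : Fin n → X × Y, Qdist Wb strat n h * (1 - f h)) ≤
      n * ⨆ x, Dkl (W x) (Wb x) := by
  have h_one_sub : ∀ h, 1 - f h ∈ Set.Icc (0 : ℝ) 1 :=
    fun h => ⟨sub_nonneg.2 (hf h).2, sub_le_self 1 (hf h).1⟩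
  have hQ := qdist_nonneg hW hstrat n
  have hQb := qdist_nonneg hWb hstrat n
  have hQ₁ := sum_qdist hW hstrat n
  have hQb₁ := sum_qdist hWb hstrat n
  calc _ ≤ _ := neg_binEnt_sub_mul_log_le_dkl (sum_mul_mem_Icc hQ hQ₁ h_one_sub)
        (sum_mul_mem_Icc hQb hQb₁ h_one_sub)
    _ ≤ Dkl (Qdist W strat n) (Qdist Wb strat n) :=
      dkl_test_outcome_le_dkl hQ hQb hQ₁ hQb₁
        (fun h => not_imp_not.1 (qdist_ne_zero_of_ne_zero hWb)) _ h_one_sub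
    _ ≤ _ := dkl_qdist_le hW hWb hstrat (le_ciSup (Set.finite_range _).bddAbove) n

theorem stmt11 {X Y : Type*} [Fintype X] [Fintype Y] [Nonempty X]
    (W Wb : X → Y → ℝ) (hW : IsChannel W) (hWb : IsChannel Wb)
    (strat : (k : ℕ) → (Fin k → X × Y) → X → ℝ) (hstrat : IsStrategy strat)
    (n : ℕ) (f : (Fin n → X × Y) → ℝ) (hf : ∀ h, f h ∈ Set.Icc (0 : ℝ) 1) :
    -binEnt (∑ h : Fin n → X × Y, Qdist W strat n h * (1 - f h)) -
      (∑ h : Fin n → X × Y, Qdist W strat n h * (1 - f h)) *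
        Real.log (∑ h : Fin n → X × Y, Qdist Wb strat n h * (1 - f h)) ≤
      n * ⨆ x, Dkl (W x) (Wb x) :=
  stmt11_general W Wb hW hWb strat hstrat n f hf
end
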